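/- Let D be a directed acyclic graph with s, t ∈ V(D) and nonnegative edge costs c : E(D) → ℝ≥0. For every x : E(D) → ℝ with x ≥ 0 satisfying Σ_{e ∈ P} x(e) ≥ 1 for every odd-length s→t path P in D, there exists a set F ⊆ E(D) that intersects every odd-length s→t path in D and satisfies Σ_{e ∈ F} c(e) ≤ 2 · Σ_{e ∈ E(D)} c(e) x(e). In particular, the integrality gap of the odd path blocker LP in directed acyclic graphs is at most 2. -/

import Mathlib

/-- A (simple) directed path in the directed graph `G`, represented as a nonempty
list of pairwise distinct vertices in which every consecutive pair is an edge of `G`. -/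
def IsPath {V : Type*} (G : V → V → Prop) (p : List V) : Prop :=
  p ≠ [] ∧ p.Chain' G ∧ p.Nodup

/-- `p` is a directed path from `u` to `v` in `G`. -/
def IsPathFrom {V : Type*} (G : V → V → Prop) (u v : V) (p : List V) : Prop :=
  IsPath G p ∧ p.head? = some u ∧ p.getLast? = some v

/-- The length (number of edges) of a path, given as its list of vertices. -/
def pathLen {V : Type*} (p : List V) : ℕ := p.length - 1

/-- The list of directed edges traversed by a path. -/
def edgesOf {V : Type*} (p : List V) : List (V × V) := p.zip p.tail

/-- A directed graph is acyclic (a DAG) if no vertex lies on a directed cycle. -/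
def Acyclic {V : Type*} (G : V → V → Prop) : Prop :=
  ∀ v, ¬ Relation.TransGen G v v

/-- The graph obtained from `G` by deleting the vertex set `M`. -/
def delV {V : Type*} (G : V → V → Prop) (M : Set V) : V → V → Prop :=
  fun a b => G a b ∧ a ∉ M ∧ b ∉ M

/-!
Let `d(v, b)` be the `x`-length of a shortest `s → v` path of parity `b`, truncated at `1`.
Since `D` is acyclic, a shortest path to `u` extended by an edge `uv` is again a path, so
`d(v, ¬b) ≤ d(u, b) + x(uv)` whenever `d(u, b) < 1`. For a threshold `θ ∈ [0, 1)` cut the edge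
`uv` if `d(u, b) ≤ θ < d(v, ¬b)` for some `b`. Along an odd `s → t` path the labels run from
`d(s, even) = 0 ≤ θ` to `d(t, odd) ≥ 1 > θ`, so some edge of it is cut; and a uniformly random
`θ` cuts `uv` with probability at most `2 x(uv)`, so some `θ` yields a blocker of cost at most
`2 ∑ c x`.
-/

open MeasureTheory Set

namespace List.IsChain

variable {V : Type*} {G : V → V → Prop}

lemma rel_of_mem_edgesOf {p : List V} (hp : p.IsChain G) {e : V × V} (he : e ∈ edgesOf p) :
    G e.1 e.2 := by
  induction p with
  | nil => simp [edgesOf] at he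
  | cons u q ih =>
    cases q with
    | nil => simp [edgesOf] at he
    | cons v r =>
      rw [List.isChain_cons_cons] at hp
      rcases List.mem_cons.mp he with rfl | he
      · exact hp.1
      · exact ih hp.2 he

end List.IsChain

section Paths

variable {V : Type*} {G : V → V → Prop}

lemma edgesOf_cons_cons (u v : V) (l : List V) :
    edgesOf (u :: v :: l) = (u, v) :: edgesOf (v :: l) := rfl

lemma edgesOf_append_singleton {p : List V} {u : V} (hu : p.getLast? = some u) (v : V) :
    edgesOf (p ++ [v]) = edgesOf p ++ [(u, v)] := by
  induction p with
  | nil => simp at hu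
  | cons a q ih =>
    cases q with
    | nil => simp_all [edgesOf]
    | cons b r =>
      rw [List.getLast?_cons_cons] at hu
      simp only [List.cons_append, edgesOf_cons_cons] at ih ⊢
      rw [ih hu]

lemma pathLen_append_singleton {p : List V} (hp : p ≠ []) (v : V) :
    pathLen (p ++ [v]) = pathLen p + 1 := by
  have := List.length_pos_iff.mpr hp
  simp only [pathLen, List.length_append, List.length_singleton]
  omega

lemma IsPathFrom.append_singleton (hG : Acyclic G) {s u v : V} {p : List V}
    (hp : IsPathFrom G s u p) (huv : G u v) : IsPathFrom G s v (p ++ [v]) := by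
  obtain ⟨⟨hne, hch, hnd⟩, hs, hu⟩ := hp
  have hch : p.IsChain G := hch
  have hreach : ∀ w ∈ p, Relation.ReflTransGen G w u :=
    hch.backwards_induction _ _ (fun _ _ h h' => h'.head h) fun hne => by
      rw [List.getLast?_eq_some_getLast hne, Option.some_inj] at hu
      rw [hu]
  have hvp : v ∉ p := fun hv => hG v (.tail' (hreach v hv) huv)
  refine ⟨⟨by simp, ?_, hnd.append (List.nodup_singleton v) (by simpa)⟩, ?_, by simp⟩
  · exact List.isChain_append.2 ⟨hch, List.isChain_singleton v, by simp_all⟩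
  · rwa [List.head?_append_of_ne_nil _ hne]

lemma finite_setOf_isPathFrom [Finite V] (s v : V) : {p | IsPathFrom G s v p}.Finite := by
  have := Fintype.ofFinite V
  exact (Set.finite_coe_iff.1 (Finite.of_fintype {p : List V // p.Nodup})).subset
    fun p hp => hp.1.2.2

end Paths

section ParityDistance

variable {V : Type*} (D : V → V → Prop) (x : V × V → ℝ) (s : V)

def pathWeight (p : List V) : ℝ := ((edgesOf p).map x).sum

def parityPaths (v : V) (b : Bool) : Set (List V) :=
  {p | IsPathFrom D s v p ∧ (Odd (pathLen p) ↔ b)}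

/-- Truncating at `1` keeps the infimum away from the junk value `sInf ∅ = 0`. -/
noncomputable def parityDist (v : V) (b : Bool) : ℝ :=
  sInf (insert 1 (pathWeight x '' parityPaths D s v b))

variable {D x s}

lemma pathWeight_append_singleton {p : List V} {u : V} (hu : p.getLast? = some u) (v : V) :
    pathWeight x (p ++ [v]) = pathWeight x p + x (u, v) := by
  simp [pathWeight, edgesOf_append_singleton hu]

lemma one_le_parityDist_true {t : V}
    (hx : ∀ p, IsPathFrom D s t p → Odd (pathLen p) → 1 ≤ pathWeight x p) :
    1 ≤ parityDist D x s t true :=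
  le_csInf (insert_nonempty _ _) <| by
    rintro _ (rfl | ⟨p, hp, rfl⟩)
    exacts [le_rfl, hx p hp.1 (hp.2.2 rfl)]

variable [Finite V]

lemma finite_parityDist_candidates (v : V) (b : Bool) :
    (insert 1 (pathWeight x '' parityPaths D s v b)).Finite :=
  (((finite_setOf_isPathFrom s v).subset fun _ hp => hp.1).image _).insert 1

lemma parityDist_le_of_mem {v : V} {b : Bool} {p : List V} (hp : p ∈ parityPaths D s v b) :
    parityDist D x s v b ≤ pathWeight x p :=
  csInf_le (finite_parityDist_candidates v b).bddBelow
    (mem_insert_of_mem _ (mem_image_of_mem _ hp))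

lemma parityDist_self_false_nonpos : parityDist D x s s false ≤ 0 :=
  parityDist_le_of_mem (p := [s])
    ⟨⟨⟨by simp, List.isChain_singleton s, by simp⟩, rfl, rfl⟩, by simp [pathLen]⟩

lemma exists_mem_parityPaths_pathWeight_eq {v : V} {b : Bool}
    (h : parityDist D x s v b < 1) :
    ∃ p ∈ parityPaths D s v b, pathWeight x p = parityDist D x s v b := by
  rcases (insert_nonempty _ _).csInf_mem (finite_parityDist_candidates v b) with h1 | hp
  · rw [parityDist, h1] at h
    exact absurd h (lt_irrefl 1)
  · exact hp

lemma parityDist_le_add (hD : Acyclic D) {u v : V} (huv : D u v) {b : Bool}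
    (h : parityDist D x s u b < 1) :
    parityDist D x s v (!b) ≤ parityDist D x s u b + x (u, v) := by
  obtain ⟨p, ⟨hp, hpar⟩, hw⟩ := exists_mem_parityPaths_pathWeight_eq h
  have hpar' : Odd (pathLen (p ++ [v])) ↔ (!b) = true := by
    rw [pathLen_append_singleton hp.1.1, Nat.odd_add_one, hpar]
    cases b <;> simp
  calc parityDist D x s v (!b) ≤ pathWeight x (p ++ [v]) :=
        parityDist_le_of_mem ⟨hp.append_singleton hD huv, hpar'⟩
    _ = parityDist D x s u b + x (u, v) := by
        rw [pathWeight_append_singleton hp.2.2, hw]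

end ParityDistance

section Thresholds

variable {V : Type*}

/-- A discrete intermediate value theorem for a labelling whose parity index flips at every
step of the list. -/
lemma exists_mem_edgesOf_le_lt (f : V → Bool → ℝ) (θ : ℝ) (p : List V) {u w : V} {b : Bool}
    (hw : (u :: p).getLast? = some w) (hu : f u b ≤ θ)
    (hθ : θ < f w (b ^^ decide (Odd p.length))) :
    ∃ e ∈ edgesOf (u :: p), ∃ b', f e.1 b' ≤ θ ∧ θ < f e.2 (!b') := by
  induction p generalizing u b with
  | nil =>
    obtain rfl : u = w := by simpa using hw
    exact absurd hu (by simpa using hθ)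
  | cons v q ih =>
    by_cases hv : f v (!b) ≤ θ
    · obtain ⟨e, he, hcut⟩ := ih (by simpa using hw) hv
        (by simpa [Nat.odd_add_one, ← Nat.not_even_iff_odd] using hθ)
      exact ⟨e, by rw [edgesOf_cons_cons]; exact List.mem_cons_of_mem _ he, hcut⟩
    · exact ⟨(u, v), by simp [edgesOf_cons_cons], b, hu, not_le.mp hv⟩

def cutThresholds (d : V → Bool → ℝ) (e : V × V) : Set ℝ :=
  ⋃ b, Ico (d e.1 b) (d e.2 !b)

lemma measurableSet_cutThresholds (d : V → Bool → ℝ) (e : V × V) :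
    MeasurableSet (cutThresholds d e) :=
  .iUnion fun _ => measurableSet_Ico

lemma volume_real_Ico_inter_Ico_zero_one_le {a b r : ℝ} (hr : 0 ≤ r)
    (h : a < 1 → b ≤ a + r) :
    volume.real (Ico a b ∩ Ico 0 1) ≤ r := by
  rw [Ico_inter_Ico, Real.volume_real_Ico]
  by_cases ha : a < 1
  · have := h ha
    exact max_le (by linarith [min_le_left b 1, le_max_left a 0]) hr
  · exact max_le (by linarith [min_le_right b 1, le_max_left a 0]) hr

variable {D : V → V → Prop} {x : V × V → ℝ} {s : V} [Finite V]

lemma volume_real_cutThresholds_parityDist_inter_le (hD : Acyclic D) {e : V × V}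
    (he : D e.1 e.2) (hxe : 0 ≤ x e) :
    volume.real (cutThresholds (parityDist D x s) e ∩ Ico 0 1) ≤ 2 * x e :=
  calc volume.real (cutThresholds (parityDist D x s) e ∩ Ico 0 1)
      ≤ ∑ b : Bool,
          volume.real (Ico (parityDist D x s e.1 b) (parityDist D x s e.2 !b) ∩ Ico 0 1) := by
        rw [cutThresholds, iUnion_inter]
        exact measureReal_iUnion_fintype_le _
    _ ≤ ∑ _ : Bool, x e := Finset.sum_le_sum fun b _ =>
        volume_real_Ico_inter_Ico_zero_one_le hxe (parityDist_le_add hD he)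
    _ = 2 * x e := by rw [Fintype.sum_bool, two_mul]

lemma exists_mem_edgesOf_mem_cutThresholds {t : V}
    (hx : ∀ p, IsPathFrom D s t p → Odd (pathLen p) → 1 ≤ pathWeight x p)
    {θ : ℝ} (hθ : θ ∈ Ico (0 : ℝ) 1) {p : List V} (hp : IsPathFrom D s t p)
    (hodd : Odd (pathLen p)) :
    ∃ e ∈ edgesOf p, θ ∈ cutThresholds (parityDist D x s) e := by
  obtain ⟨⟨hne, -, -⟩, hs, ht⟩ := hp
  obtain ⟨u, q, rfl⟩ := List.exists_cons_of_ne_nil hne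
  obtain rfl : s = u := by simpa using hs.symm
  have hodd : Odd q.length := by simpa [pathLen] using hodd
  obtain ⟨e, he, b, hcut⟩ := exists_mem_edgesOf_le_lt (parityDist D x s) θ q ht
    (parityDist_self_false_nonpos.trans hθ.1)
    (by simpa [hodd] using hθ.2.trans_le (one_le_parityDist_true hx))
  exact ⟨e, he, mem_iUnion.2 ⟨b, hcut⟩⟩

end Thresholds

lemma exists_mem_Ico_sum_indicator_le {ι : Type*} (E : Finset ι) (U : ι → Set ℝ)
    (hU : ∀ i, MeasurableSet (U i)) (c : ι → ℝ) :
    ∃ θ ∈ Ico (0 : ℝ) 1, ∑ i ∈ E, (U i).indicator (fun _ => c i) θ ≤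
      ∑ i ∈ E, c i * volume.real (U i ∩ Ico 0 1) := by
  let μ := volume.restrict (Ico (0 : ℝ) 1)
  have : IsProbabilityMeasure μ := ⟨by simp [μ]⟩
  have hint : ∀ i ∈ E, Integrable ((U i).indicator fun _ => c i) μ :=
    fun i _ => (integrable_const _).indicator (hU i)
  obtain ⟨θ, hθ, hle⟩ := exists_notMem_null_le_integral (integrable_finsetSum E hint)
    (N := (Ico (0 : ℝ) 1)ᶜ) (by simp [μ, Measure.restrict_apply measurableSet_Ico.compl])
  refine ⟨θ, not_not.1 hθ, hle.trans_eq ?_⟩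
  rw [integral_finsetSum E hint]
  refine Finset.sum_congr rfl fun i _ => ?_
  rw [integral_indicator_const _ (hU i), measureReal_restrict_apply (hU i), smul_eq_mul, mul_comm]

theorem odd_path_blocker_gap_le_two {V : Type*} [Fintype V]
    (D : V → V → Prop) (hD : Acyclic D) (s t : V)
    (c : V × V → ℝ) (hc : ∀ e, 0 ≤ c e)
    (x : V × V → ℝ) (hx0 : ∀ e, 0 ≤ x e)
    (hx : ∀ p, IsPathFrom D s t p → Odd (pathLen p) →
      1 ≤ ((edgesOf p).map x).sum) :
    ∃ F : Set (V × V), F ⊆ {e : V × V | D e.1 e.2} ∧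
      (∀ p, IsPathFrom D s t p → Odd (pathLen p) → ∃ e ∈ edgesOf p, e ∈ F) ∧
      ∑ᶠ e ∈ F, c e ≤ 2 * ∑ᶠ e ∈ {e : V × V | D e.1 e.2}, c e * x e := by
  classical
  set U := cutThresholds (parityDist D x s)
  set E : Finset (V × V) := {e | D e.1 e.2}
  obtain ⟨θ, hθ, hcost⟩ :=
    exists_mem_Ico_sum_indicator_le E U (measurableSet_cutThresholds _) c
  refine ⟨{e | D e.1 e.2 ∧ θ ∈ U e}, fun e he => he.1, fun p hp hodd => ?_, ?_⟩
  · obtain ⟨e, he, hθe⟩ := exists_mem_edgesOf_mem_cutThresholds hx hθ hp hodd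
    exact ⟨e, he, List.IsChain.rel_of_mem_edgesOf hp.1.2.1 he, hθe⟩
  have hF : {e | D e.1 e.2 ∧ θ ∈ U e} = ↑(E.filter (θ ∈ U ·)) := by ext; simp [E]
  have hE : {e : V × V | D e.1 e.2} = ↑E := by ext; simp [E]
  calc ∑ᶠ e ∈ {e | D e.1 e.2 ∧ θ ∈ U e}, c e
      = ∑ e ∈ E, (U e).indicator (fun _ => c e) θ := by
        rw [hF, finsum_mem_coe_finset, Finset.sum_filter]
        rfl
    _ ≤ ∑ e ∈ E, c e * volume.real (U e ∩ Ico 0 1) := hcost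
    _ ≤ ∑ e ∈ E, c e * (2 * x e) := Finset.sum_le_sum fun e he =>
        mul_le_mul_of_nonneg_left (volume_real_cutThresholds_parityDist_inter_le hD
          (by simpa [E] using he) (hx0 e)) (hc e)
    _ = 2 * ∑ᶠ e ∈ {e : V × V | D e.1 e.2}, c e * x e := by
        rw [hE, finsum_mem_coe_finset, Finset.mul_sum]
        exact Finset.sum_congr rfl fun e _ => by ring
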